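/- arXiv:1109.6050 — 2 statements merged into one kernel-verified Lean document; each statement's English description precedes it below -/
import Mathlib

section
/- Let N > 0 and for n ≥ 1 define Q_n(x) = -N(x+1)U_{n-1}(x) + (1+2nN)T_n(x), with Q_0(x) = 1, where T_n and U_n are the Chebyshev polynomials of the first and second kind. Set p_n = (1/2)·(1+(2n-1)N)/(1+(2n+1)N), q_n = (1/2)·(1+(2n+1)N)/(1+(2n-1)N), and r_n = -2N²/((1+(2n-1)N)(1+(2n+1)N)) for n ≥ 1. Then for all n ≥ 1 and all real x: p_n Q_{n+1}(x) + r_n Q_n(x) + q_n Q_{n-1}(x) = x Q_n(x). -/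
/-- Three-term recurrence for the Koornwinder-Chebyshev polynomials
`Q_n(x) = -N(x+1)U_{n-1}(x) + (1+2nN)T_n(x)` (with `Q_0 = 1`):
`p_n Q_{n+1}(x) + r_n Q_n(x) + q_n Q_{n-1}(x) = x Q_n(x)` for `n ≥ 1`. -/
theorem koornwinder_chebyshev_three_term_recurrence (N : ℝ) (hN : 0 < N)
    (Q : ℕ → ℝ → ℝ) (p q r : ℕ → ℝ)
    (hQ0 : ∀ x : ℝ, Q 0 x = 1)
    (hQ : ∀ n : ℕ, 1 ≤ n → ∀ x : ℝ, Q n x =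
      -N * (x + 1) * (Polynomial.Chebyshev.U ℝ ((n : ℤ) - 1)).eval x
        + (1 + 2 * n * N) * (Polynomial.Chebyshev.T ℝ (n : ℤ)).eval x)
    (hp : ∀ n : ℕ, 1 ≤ n → p n = (1 / 2) * (1 + (2 * n - 1) * N) / (1 + (2 * n + 1) * N))
    (hq : ∀ n : ℕ, 1 ≤ n → q n = (1 / 2) * (1 + (2 * n + 1) * N) / (1 + (2 * n - 1) * N))
    (hr : ∀ n : ℕ, 1 ≤ n →
      r n = -2 * N ^ 2 / ((1 + (2 * n - 1) * N) * (1 + (2 * n + 1) * N))) :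
    ∀ n : ℕ, 1 ≤ n → ∀ x : ℝ,
      p n * Q (n + 1) x + r n * Q n x + q n * Q (n - 1) x = x * Q n x := by
  intro n hn x
  have hn1 : (1 : ℝ) ≤ (n : ℝ) := by exact_mod_cast hn
  -- abbreviations
  set a : ℝ := (Polynomial.Chebyshev.T ℝ (n : ℤ)).eval x with ha
  set c : ℝ := (Polynomial.Chebyshev.U ℝ ((n : ℤ) - 1)).eval x with hc
  -- Chebyshev relations, evaluated at x
  have hTU : a = (Polynomial.Chebyshev.U ℝ (n : ℤ)).eval x - x * c := by
    have := congrArg (Polynomial.eval x) (Polynomial.Chebyshev.T_eq_U_sub_X_mul_U ℝ (n : ℤ))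
    simpa using this
  have hUrec : (Polynomial.Chebyshev.U ℝ (n : ℤ)).eval x
      = 2 * x * c - (Polynomial.Chebyshev.U ℝ ((n : ℤ) - 2)).eval x := by
    have := congrArg (Polynomial.eval x) (Polynomial.Chebyshev.U_eq ℝ (n : ℤ))
    simpa using this
  have hd : (Polynomial.Chebyshev.U ℝ ((n : ℤ) - 2)).eval x = x * c - a := by
    rw [hTU, hUrec]; ring
  have hb : (Polynomial.Chebyshev.T ℝ ((n : ℤ) - 1)).eval x = c - x * (x * c - a) := by
    have h2 := congrArg (Polynomial.eval x)
      (Polynomial.Chebyshev.T_eq_U_sub_X_mul_U ℝ ((n : ℤ) - 1))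
    simp only [Polynomial.eval_sub, Polynomial.eval_mul, Polynomial.eval_X] at h2
    rw [show (n : ℤ) - 1 - 1 = (n : ℤ) - 2 by ring, hd, ← hc] at h2
    exact h2
  have hT1 : (Polynomial.Chebyshev.T ℝ ((n : ℤ) + 1)).eval x
      = 2 * x * a - (c - x * (x * c - a)) := by
    have h2 := congrArg (Polynomial.eval x) (Polynomial.Chebyshev.T_add_one ℝ (n : ℤ))
    simp only [Polynomial.eval_sub, Polynomial.eval_mul, Polynomial.eval_X,
      Polynomial.eval_ofNat] at h2
    rw [hb, ← ha] at h2
    exact h2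
  have hUn : (Polynomial.Chebyshev.U ℝ (n : ℤ)).eval x = x * c + a := by
    rw [hUrec, hd]; ring
  -- the three Q values
  have hQn : Q n x = -N * (x + 1) * c + (1 + 2 * n * N) * a := hQ n hn x
  have hQn1 : Q (n + 1) x
      = -N * (x + 1) * (x * c + a) + (1 + 2 * (n + 1) * N) * (2 * x * a - (c - x * (x * c - a))) := by
    have h := hQ (n + 1) (by omega) x
    have e1 : ((n + 1 : ℕ) : ℤ) - 1 = (n : ℤ) := by push_cast; ring
    have e2 : ((n + 1 : ℕ) : ℤ) = (n : ℤ) + 1 := by push_cast; ring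
    rw [e1, e2, hUn, hT1] at h
    rw [h]; push_cast; ring
  have hQm : Q (n - 1) x
      = -N * (x + 1) * (x * c - a) + (1 + 2 * ((n : ℝ) - 1) * N) * (c - x * (x * c - a)) := by
    rcases Nat.eq_or_lt_of_le hn with h1 | h2
    · -- n = 1
      have hne : n = 1 := h1.symm
      subst hne
      rw [hQ0]
      have ha' : a = x := by rw [ha]; norm_num [Polynomial.Chebyshev.T_one]
      have hc' : c = 1 := by rw [hc]; norm_num [Polynomial.Chebyshev.U_zero]
      rw [ha', hc']
      push_cast; ring
    · -- n ≥ 2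
      have h := hQ (n - 1) (by omega) x
      have e1 : ((n - 1 : ℕ) : ℤ) - 1 = (n : ℤ) - 2 := by
        have : ((n - 1 : ℕ) : ℤ) = (n : ℤ) - 1 := by
          push_cast [Nat.cast_sub (by omega : 1 ≤ n)]; ring
        omega
      have e2 : ((n - 1 : ℕ) : ℤ) = (n : ℤ) - 1 := by
        push_cast [Nat.cast_sub (by omega : 1 ≤ n)]; ring
      have e3 : ((n - 1 : ℕ) : ℝ) = (n : ℝ) - 1 := by
        push_cast [Nat.cast_sub (by omega : 1 ≤ n)]; ring
      rw [e1, e2, e3, hd, hb] at h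
      exact h
  -- denominators nonzero
  have hden1 : (1 + (2 * (n : ℝ) - 1) * N) ≠ 0 := by nlinarith
  have hden2 : (1 + (2 * (n : ℝ) + 1) * N) ≠ 0 := by nlinarith
  rw [hp n hn, hq n hn, hr n hn, hQn, hQn1, hQm]
  field_simp
  ring
end

section
/- Let N > 0 and λ ≥ 2N²/((1+N)(1+3N)). Define p_n^λ = (1/(2(1+λ)))·(1+(2n-1)N)/(1+(2n+1)N), q_n^λ = (1/(2(1+λ)))·(1+(2n+1)N)/(1+(2n-1)N) for n ≥ 1, r_n^λ = 1 - p_n^λ - q_n^λ, and p_0^λ = 1/((1+λ)(N+1)), r_0^λ = 1 - p_0^λ. Then all of p_n^λ, q_n^λ, r_n^λ, p_0^λ, r_0^λ lie in [0,1], i.e., these define valid transition probabilities of a nearest-neighbor Markov chain on ℕ. -/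
/-- For `N > 0` and `λ ≥ 2N²/((1+N)(1+3N))`, the shifted coefficients
`p_n^λ, q_n^λ, r_n^λ` (and `p_0^λ, r_0^λ`) all lie in `[0,1]`, so they define valid
transition probabilities of a nearest-neighbor Markov chain on `ℕ`. -/
theorem chebyshev_chain_shifted_probabilities (N lam : ℝ) (hN : 0 < N)
    (hlam : 2 * N ^ 2 / ((1 + N) * (1 + 3 * N)) ≤ lam)
    (p q r : ℕ → ℝ)
    (hp0 : p 0 = 1 / ((1 + lam) * (N + 1)))
    (hr0 : r 0 = 1 - p 0)
    (hp : ∀ n : ℕ, 1 ≤ n →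
      p n = (1 / (2 * (1 + lam))) * (1 + (2 * n - 1) * N) / (1 + (2 * n + 1) * N))
    (hq : ∀ n : ℕ, 1 ≤ n →
      q n = (1 / (2 * (1 + lam))) * (1 + (2 * n + 1) * N) / (1 + (2 * n - 1) * N))
    (hr : ∀ n : ℕ, 1 ≤ n → r n = 1 - p n - q n) :
    p 0 ∈ Set.Icc (0 : ℝ) 1 ∧ r 0 ∈ Set.Icc (0 : ℝ) 1 ∧
    ∀ n : ℕ, 1 ≤ n →
      p n ∈ Set.Icc (0 : ℝ) 1 ∧ q n ∈ Set.Icc (0 : ℝ) 1 ∧ r n ∈ Set.Icc (0 : ℝ) 1 := by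
  have hlam0 : 0 ≤ lam := le_trans (by positivity) hlam
  have h1l : (0:ℝ) < 1 + lam := by linarith
  have hkey0 : 2 * N ^ 2 ≤ lam * ((1 + N) * (1 + 3 * N)) := by
    rw [div_le_iff₀ (by positivity)] at hlam
    linarith
  have hp0icc : p 0 ∈ Set.Icc (0:ℝ) 1 := by
    rw [hp0]
    constructor
    · positivity
    · rw [div_le_one (by positivity)]
      nlinarith
  refine ⟨hp0icc, ?_, ?_⟩
  · rw [hr0]
    exact ⟨by linarith [hp0icc.2], by linarith [hp0icc.1]⟩
  · intro n hn
    have hm : (1:ℝ) ≤ (n:ℝ) := by exact_mod_cast hn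
    set m : ℝ := (n:ℝ) with hmdef
    have ha : (0:ℝ) < 1 + (2 * m - 1) * N := by nlinarith
    have hb : (0:ℝ) < 1 + (2 * m + 1) * N := by nlinarith
    have hab : (1 + N) * (1 + 3 * N) ≤ (1 + (2 * m - 1) * N) * (1 + (2 * m + 1) * N) := by
      nlinarith [mul_nonneg (sub_nonneg.2 hm) hN.le,
        mul_nonneg (mul_nonneg (mul_nonneg (sub_nonneg.2 hm) (by linarith : (0:ℝ) ≤ m + 1)) hN.le) hN.le]
    have hkey : 2 * N ^ 2 ≤ lam * ((1 + (2 * m - 1) * N) * (1 + (2 * m + 1) * N)) := by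
      nlinarith
    have hpn : p n = (1 / (2 * (1 + lam))) * (1 + (2 * m - 1) * N) / (1 + (2 * m + 1) * N) :=
      hp n hn
    have hqn : q n = (1 / (2 * (1 + lam))) * (1 + (2 * m + 1) * N) / (1 + (2 * m - 1) * N) :=
      hq n hn
    have hp0' : 0 ≤ p n := by rw [hpn]; positivity
    have hq0' : 0 ≤ q n := by rw [hqn]; positivity
    have key2 : (1 + (2 * m - 1) * N) ^ 2 + (1 + (2 * m + 1) * N) ^ 2
        ≤ 2 * (1 + lam) * ((1 + (2 * m - 1) * N) * (1 + (2 * m + 1) * N)) := by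
      nlinarith
    have hpq : p n + q n ≤ 1 := by
      have heq : p n + q n = ((1 + (2 * m - 1) * N) ^ 2 + (1 + (2 * m + 1) * N) ^ 2)
          / (2 * (1 + lam) * ((1 + (2 * m - 1) * N) * (1 + (2 * m + 1) * N))) := by
        rw [hpn, hqn]
        field_simp
      rw [heq, div_le_one (by positivity)]
      linarith [key2]
    refine ⟨⟨hp0', by linarith⟩, ⟨hq0', by linarith⟩, ?_⟩
    rw [hr n hn]
    constructor <;> linarith
end
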